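/- Let x be a strategy profile of a multi-leader congestion game with an adversary, let i be a player and s a resource with s ≠ x_i, and let x' = (s, x_{−i}) be the profile obtained after player i deviates from x_i to s. Let j be a player with x_j ∉ {x_i, s}, and write M = M(x). Then π_j(x') > π_j(x) if and only if ℓ_{x_i}(x) = M, ℓ_s(x) ≤ M − 2, and either ℓ_{x_j}(x) = M, or ℓ_{x_j}(x) = M − 1 and x_i is the only resource with load M in x. -/
import Mathlib


open Finset

variable {ι : Type*} {m : ℕ}

/-- The load of resource `r` under strategy profile `x`. -/
def load [Fintype ι] [DecidableEq ι] (x : ι → Fin m) (r : Fin m) : ℕ :=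
  (Finset.univ.filter (fun i => x i = r)).card

/-- The maximum load `M(x)`. -/
def maxLoad [Fintype ι] [DecidableEq ι] (x : ι → Fin m) : ℕ :=
  Finset.univ.sup (fun r => load x r)

/-- The number `p(x)` of resources with maximum load. -/
def numMax [Fintype ι] [DecidableEq ι] (x : ι → Fin m) : ℕ :=
  (Finset.univ.filter (fun r => load x r = maxLoad x)).card

/-- The attack term `κ*_r(x)`. -/
noncomputable def kappa [Fintype ι] [DecidableEq ι] (B : ℝ) (x : ι → Fin m) (r : Fin m) : ℝ :=
  if load x r = maxLoad x then B / (numMax x : ℝ) else 0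

/-- The cost `c_r(x)` of resource `r` under profile `x`. -/
noncomputable def rcost [Fintype ι] [DecidableEq ι] (a : Fin m → ℝ) (B : ℝ)
    (x : ι → Fin m) (r : Fin m) : ℝ :=
  a r * (load x r : ℝ) + kappa B x r

/-- The private cost `π_i(x)` of player `i` under profile `x`. -/
noncomputable def pcost [Fintype ι] [DecidableEq ι] (a : Fin m → ℝ) (B : ℝ)
    (x : ι → Fin m) (i : ι) : ℝ :=
  rcost a B x (x i)

/-- `x` is an `α`-approximate pure Nash equilibrium. -/
def isApproxPNE [Fintype ι] [DecidableEq ι] (a : Fin m → ℝ) (B : ℝ) (α : ℝ)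
    (x : ι → Fin m) : Prop :=
  ∀ (i : ι) (r : Fin m), pcost a B x i ≤ α * pcost a B (Function.update x i r) i

/-- `r` is the only resource with maximum load in `x`. -/
def onlyMax [Fintype ι] [DecidableEq ι] (x : ι → Fin m) (r : Fin m) : Prop :=
  load x r = maxLoad x ∧ ∀ s : Fin m, load x s = maxLoad x → s = r

section Aux
variable [Fintype ι] [DecidableEq ι]

lemma load_update_of_ne (x : ι → Fin m) (i : ι) (s r : Fin m)
    (h1 : r ≠ x i) (h2 : r ≠ s) : load (Function.update x i s) r = load x r := by
  unfold load
  congr 1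
  ext k
  simp only [Finset.mem_filter, Finset.mem_univ, true_and]
  rcases eq_or_ne k i with rfl | hk
  · rw [Function.update_self]
    exact iff_of_false (fun h => h2 h.symm) (fun h => h1 h.symm)
  · rw [Function.update_of_ne hk]

lemma load_update_target (x : ι → Fin m) (i : ι) (s : Fin m) (hs : s ≠ x i) :
    load (Function.update x i s) s = load x s + 1 := by
  unfold load
  have h : (Finset.univ.filter (fun k => Function.update x i s k = s))
      = insert i (Finset.univ.filter (fun k => x k = s)) := by
    ext k
    simp only [Finset.mem_filter, Finset.mem_univ, true_and, Finset.mem_insert]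
    rcases eq_or_ne k i with rfl | hk
    · simp [Function.update_self]
    · rw [Function.update_of_ne hk]
      simp [hk]
  rw [h, Finset.card_insert_of_notMem]
  simp only [Finset.mem_filter, Finset.mem_univ, true_and]
  exact fun h => hs h.symm

lemma load_update_source (x : ι → Fin m) (i : ι) (s : Fin m) (hs : s ≠ x i) :
    load (Function.update x i s) (x i) + 1 = load x (x i) := by
  unfold load
  have h : (Finset.univ.filter (fun k => Function.update x i s k = x i))
      = (Finset.univ.filter (fun k => x k = x i)).erase i := by
    ext k
    simp only [Finset.mem_filter, Finset.mem_univ, true_and, Finset.mem_erase]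
    rcases eq_or_ne k i with rfl | hk
    · simp [Function.update_self, hs]
    · rw [Function.update_of_ne hk]
      simp [hk]
  rw [h, Finset.card_erase_of_mem (by simp)]
  have : 0 < (Finset.univ.filter (fun k => x k = x i)).card :=
    Finset.card_pos.2 ⟨i, by simp⟩
  omega

lemma load_le_maxLoad (x : ι → Fin m) (r : Fin m) : load x r ≤ maxLoad x :=
  Finset.le_sup (Finset.mem_univ r)

lemma exists_load_eq_maxLoad (x : ι → Fin m) (r0 : Fin m) :
    ∃ r, load x r = maxLoad x := by
  obtain ⟨b, -, hb⟩ := Finset.exists_mem_eq_sup Finset.univ ⟨r0, Finset.mem_univ r0⟩ (load x)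
  exact ⟨b, hb.symm⟩

lemma numMax_pos (x : ι → Fin m) (r0 : Fin m) : 0 < numMax x := by
  obtain ⟨r, hr⟩ := exists_load_eq_maxLoad x r0
  exact Finset.card_pos.2 ⟨r, Finset.mem_filter.2 ⟨Finset.mem_univ r, hr⟩⟩

lemma maxLoad_eq (x : ι → Fin m) (M : ℕ) (r0 : Fin m)
    (h0 : load x r0 = M) (h : ∀ r, load x r ≤ M) : maxLoad x = M :=
  le_antisymm (Finset.sup_le fun r _ => h r) (h0 ▸ Finset.le_sup (Finset.mem_univ r0))

lemma kappa_nonneg {B : ℝ} (hB : 0 ≤ B) (x : ι → Fin m) (r : Fin m) :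
    0 ≤ kappa B x r := by
  unfold kappa
  split_ifs
  · exact div_nonneg hB (Nat.cast_nonneg _)
  · exact le_refl 0

end Aux

/-- characterization of when a non-involved player's private
cost strictly increases after player i deviates from x_i to s. -/
theorem cost_increase_iff (n m : ℕ) (a : Fin m → ℝ) (ha : ∀ r, 0 ≤ a r)
    (B : ℝ) (hB : 0 < B) (x : Fin n → Fin m)
    (i : Fin n) (s : Fin m) (hs : s ≠ x i)
    (j : Fin n) (hj1 : x j ≠ x i) (hj2 : x j ≠ s) :
    pcost a B (Function.update x i s) j > pcost a B x j ↔
      (load x (x i) = maxLoad x ∧ load x s + 2 ≤ maxLoad x ∧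
        (load x (x j) = maxLoad x ∨
         (load x (x j) + 1 = maxLoad x ∧ onlyMax x (x i)))) := by
  set x' := Function.update x i s with hx'
  have hji : j ≠ i := fun h => hj1 (by rw [h])
  have hxj' : x' j = x j := Function.update_of_ne hji _ _
  have hloadj : load x' (x j) = load x (x j) := load_update_of_ne x i s (x j) hj1 hj2
  have hsrc : load x' (x i) + 1 = load x (x i) := load_update_source x i s hs
  have htgt : load x' s = load x s + 1 := load_update_target x i s hs
  unfold pcost rcost
  rw [hxj', hloadj, gt_iff_lt, add_lt_add_iff_left]
  by_cases hLs : load x s = maxLoad x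
  · -- S1: s already has max load; new max is M+1, attained only away from x j
    have h1 : load x (x j) < maxLoad x' := by
      have h2 : load x' s ≤ maxLoad x' := load_le_maxLoad x' s
      have h3 := load_le_maxLoad x (x j)
      rw [htgt, hLs] at h2
      omega
    refine iff_of_false (not_lt.2 ?_) (by rintro ⟨-, h, -⟩; omega)
    have hz : kappa B x' (x j) = 0 := by
      unfold kappa
      rw [hloadj, if_neg (by omega)]
    rw [hz]
    exact kappa_nonneg hB.le x (x j)
  · have hLslt : load x s < maxLoad x := lt_of_le_of_ne (load_le_maxLoad x s) hLs
    have hub : ∀ r, load x' r ≤ maxLoad x := by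
      intro r
      rcases eq_or_ne r (x i) with rfl | h1
      · have := load_le_maxLoad x (x i); omega
      · rcases eq_or_ne r s with rfl | h2
        · rw [htgt]; omega
        · rw [load_update_of_ne x i s r h1 h2]; exact load_le_maxLoad x r
    by_cases hL : load x (x i) = maxLoad x
    · by_cases hLs1 : load x s + 1 = maxLoad x
      · -- S3: s one below max; max and numMax unchanged
        have hM' : maxLoad x' = maxLoad x :=
          maxLoad_eq x' (maxLoad x) s (by rw [htgt]; exact hLs1) hub
        have hmem : x i ∈ Finset.univ.filter fun r => load x r = maxLoad x :=
          Finset.mem_filter.2 ⟨Finset.mem_univ _, hL⟩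
        have hfilt : (Finset.univ.filter fun r => load x' r = maxLoad x') =
            insert s ((Finset.univ.filter fun r => load x r = maxLoad x).erase (x i)) := by
          ext r
          simp only [Finset.mem_insert, Finset.mem_erase, Finset.mem_filter,
            Finset.mem_univ, true_and]
          rw [hM']
          rcases eq_or_ne r s with rfl | h2
          · exact iff_of_true (by rw [htgt]; exact hLs1) (Or.inl rfl)
          · rcases eq_or_ne r (x i) with rfl | h1
            · refine iff_of_false (fun h => ?_) ?_
              · rw [hL] at hsrc; omega
              · rintro (h | ⟨h, -⟩)
                · exact h2 h
                · exact h rfl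
            · rw [load_update_of_ne x i s r h1 h2]
              constructor
              · intro h; exact Or.inr ⟨h1, h⟩
              · rintro (h | ⟨-, h⟩)
                · exact absurd h h2
                · exact h
        have hsnot : s ∉ (Finset.univ.filter fun r => load x r = maxLoad x).erase (x i) :=
          fun h => hLs (Finset.mem_filter.1 (Finset.mem_of_mem_erase h)).2
        have hp' : numMax x' = numMax x := by
          unfold numMax
          rw [hfilt, Finset.card_insert_of_notMem hsnot, Finset.card_erase_of_mem hmem]
          have := Finset.card_pos.2 ⟨x i, hmem⟩
          omega
        refine iff_of_false ?_ (by rintro ⟨-, h, -⟩; omega)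
        unfold kappa
        rw [hloadj, hM', hp']
        exact lt_irrefl _
      · have hLs2 : load x s + 2 ≤ maxLoad x := by omega
        by_cases hOnly : onlyMax x (x i)
        · -- S5: x i was the unique max; new max is M - 1
          have hLjne : load x (x j) ≠ maxLoad x := fun h => hj1 (hOnly.2 (x j) h)
          have hM' : maxLoad x' = load x' (x i) := by
            refine le_antisymm (Finset.sup_le fun r _ => ?_)
              (Finset.le_sup (Finset.mem_univ _))
            rcases eq_or_ne r (x i) with rfl | h1
            · exact le_refl _
            · rcases eq_or_ne r s with rfl | h2
              · rw [htgt]; rw [hL] at hsrc; omega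
              · rw [load_update_of_ne x i s r h1 h2]
                have h3 : load x r ≠ maxLoad x := fun h => h1 (hOnly.2 r h)
                have h4 := load_le_maxLoad x r
                rw [hL] at hsrc
                omega
          unfold kappa
          rw [hloadj, hM', if_neg hLjne]
          rw [hL] at hsrc
          by_cases hLj : load x (x j) + 1 = maxLoad x
          · rw [if_pos (by omega)]
            exact iff_of_true (div_pos hB (Nat.cast_pos.2 (numMax_pos x' s)))
              ⟨hL, hLs2, Or.inr ⟨hLj, hOnly⟩⟩
          · rw [if_neg (by omega)]
            refine iff_of_false (lt_irrefl 0) ?_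
            rintro ⟨-, -, h | ⟨h, -⟩⟩
            · exact hLjne h
            · exact hLj h
        · -- S4: at least two max resources; numMax decreases by one
          obtain ⟨r', hr', hrne⟩ : ∃ r, load x r = maxLoad x ∧ r ≠ x i := by
            by_contra hc
            push_neg at hc
            exact hOnly ⟨hL, hc⟩
          have hrs : r' ≠ s := fun h => hLs (h ▸ hr')
          have hM' : maxLoad x' = maxLoad x := maxLoad_eq x' (maxLoad x) r'
            (by rw [load_update_of_ne x i s r' hrne hrs]; exact hr') hub
          have hmem : x i ∈ Finset.univ.filter fun r => load x r = maxLoad x :=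
            Finset.mem_filter.2 ⟨Finset.mem_univ _, hL⟩
          have hmem' : r' ∈ Finset.univ.filter fun r => load x r = maxLoad x :=
            Finset.mem_filter.2 ⟨Finset.mem_univ _, hr'⟩
          have hp2 : 2 ≤ numMax x := by
            have : 1 < (Finset.univ.filter fun r => load x r = maxLoad x).card :=
              Finset.one_lt_card.2 ⟨x i, hmem, r', hmem', fun h => hrne h.symm⟩
            unfold numMax
            omega
          have hfilt : (Finset.univ.filter fun r => load x' r = maxLoad x') =
              (Finset.univ.filter fun r => load x r = maxLoad x).erase (x i) := by
            ext r
            simp only [Finset.mem_erase, Finset.mem_filter, Finset.mem_univ, true_and]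
            rw [hM']
            rcases eq_or_ne r (x i) with rfl | h1
            · refine iff_of_false (fun h => ?_) (fun h => h.1 rfl)
              rw [hL] at hsrc; omega
            · rcases eq_or_ne r s with rfl | h2
              · refine iff_of_false (fun h => ?_) (fun h => ?_)
                · rw [htgt] at h; omega
                · exact absurd h.2 (by omega)
              · rw [load_update_of_ne x i s r h1 h2]
                exact ⟨fun h => ⟨h1, h⟩, fun h => h.2⟩
          have hp' : numMax x' = numMax x - 1 := by
            unfold numMax
            rw [hfilt, Finset.card_erase_of_mem hmem]
          unfold kappa
          rw [hloadj, hM', hp']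
          by_cases hLj : load x (x j) = maxLoad x
          · rw [if_pos hLj, if_pos hLj]
            refine iff_of_true ?_ ⟨hL, hLs2, Or.inl hLj⟩
            apply div_lt_div_of_pos_left hB
            · exact_mod_cast (by omega : 0 < numMax x - 1)
            · exact_mod_cast (by omega : numMax x - 1 < numMax x)
          · rw [if_neg hLj, if_neg hLj]
            refine iff_of_false (lt_irrefl 0) ?_
            rintro ⟨-, -, h | ⟨-, h⟩⟩
            · exact hLj h
            · exact hOnly h
    · -- S2: x i not at max; numMax cannot decrease
      have hLlt : load x (x i) < maxLoad x :=
        lt_of_le_of_ne (load_le_maxLoad x (x i)) hL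
      obtain ⟨r', hr'⟩ := exists_load_eq_maxLoad x s
      have hr1 : r' ≠ x i := fun h => hL (h ▸ hr')
      have hr2 : r' ≠ s := fun h => hLs (h ▸ hr')
      have hM' : maxLoad x' = maxLoad x := maxLoad_eq x' (maxLoad x) r'
        (by rw [load_update_of_ne x i s r' hr1 hr2]; exact hr') hub
      have hsub : (Finset.univ.filter fun r => load x r = maxLoad x) ⊆
          (Finset.univ.filter fun r => load x' r = maxLoad x') := by
        intro r hr
        simp only [Finset.mem_filter, Finset.mem_univ, true_and] at hr ⊢
        have h1 : r ≠ x i := fun h => hL (h ▸ hr)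
        have h2 : r ≠ s := fun h => hLs (h ▸ hr)
        rw [hM', load_update_of_ne x i s r h1 h2]
        exact hr
      have hpp' : numMax x ≤ numMax x' := Finset.card_le_card hsub
      refine iff_of_false (not_lt.2 ?_) (by rintro ⟨h, -⟩; exact hL h)
      unfold kappa
      rw [hloadj, hM']
      split_ifs with h
      · exact div_le_div_of_nonneg_left hB.le
          (Nat.cast_pos.2 (numMax_pos x s)) (Nat.cast_le.2 hpp')
      · exact le_refl 0
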